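/- Let Y be a mean zero random variable with variance σ² ∈ (0,∞) satisfying |Y| ≤ c almost surely for some constant c > 0, and let Y* be a random variable having the Y-zero biased distribution. Then |Y*| ≤ c almost surely. -/

import Mathlib

open MeasureTheory ProbabilityTheory Real

/-! Every continuous `g` vanishing on `(-∞, c]` is the derivative of `f x = ∫ t in c..x, g t`,
which also vanishes on `(-∞, c]`. If `Y ≤ c` almost surely then `E[Y f(Y)] = 0`, so the zero bias
identity forces `E[g(Y*)] = 0`; for `g x = min (max (x - c) 0) 1`, which is bounded and positive
exactly on `(c, ∞)`, this gives `Y* ≤ c` almost surely. The lower bound follows by applying this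
to `-Y`, whose zero biased distribution is that of `-Y*`. -/

/-- `Ystar` has the `Y`-zero biased distribution with respect to variance `σ2`:
`E[Y f(Y)] = σ2 * E[f'(Ystar)]` for every (absolutely continuous) differentiable
function `f` with derivative `f'` for which both expectations exist. -/
def ZeroBiased {Ω : Type*} [MeasurableSpace Ω] (μ : Measure Ω)
    (Y Ystar : Ω → ℝ) (σ2 : ℝ) : Prop :=
  ∀ f f' : ℝ → ℝ, (∀ x, HasDerivAt f (f' x) x) →
    Integrable (fun ω => Y ω * f (Y ω)) μ →
    Integrable (fun ω => f' (Ystar ω)) μ →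
    ∫ ω, Y ω * f (Y ω) ∂μ = σ2 * ∫ ω, f' (Ystar ω) ∂μ

theorem intervalIntegral_eq_zero_of_le_of_vanishes_on_Iic {g : ℝ → ℝ} {c x : ℝ}
    (hg : ∀ t ≤ c, g t = 0) (hx : x ≤ c) : ∫ t in c..x, g t = 0 := by
  rw [intervalIntegral.integral_congr (g := fun _ => 0), intervalIntegral.integral_zero]
  intro t ht
  rw [Set.uIcc_of_ge hx] at ht
  exact hg t ht.2

namespace ZeroBiased

variable {Ω : Type*} [MeasurableSpace Ω] {μ : Measure Ω} {Y Ystar : Ω → ℝ} {σ2 : ℝ}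

theorem neg (hzb : ZeroBiased μ Y Ystar σ2) :
    ZeroBiased μ (fun ω => -Y ω) (fun ω => -Ystar ω) σ2 := by
  intro f f' hf hint hint'
  have hderiv : ∀ x, HasDerivAt (fun x => -f (-x)) (f' (-x)) x := fun x => by
    simpa using ((hf (-x)).comp x (hasDerivAt_neg x)).fun_neg
  have key := hzb (fun x => -f (-x)) (fun x => f' (-x)) hderiv (by simpa using hint.neg) hint'
  simpa [integral_neg] using key

theorem integral_comp_eq_zero_of_ae_le (hzb : ZeroBiased μ Y Ystar σ2) (hσ2 : σ2 ≠ 0)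
    {c : ℝ} (hY : ∀ᵐ ω ∂μ, Y ω ≤ c) {g : ℝ → ℝ} (hg : Continuous g) (hgc : ∀ x ≤ c, g x = 0)
    (hint : Integrable (fun ω => g (Ystar ω)) μ) : ∫ ω, g (Ystar ω) ∂μ = 0 := by
  set f : ℝ → ℝ := fun x => ∫ t in c..x, g t
  have hf : ∀ x, HasDerivAt f (g x) x := fun x => (hg.integral_hasStrictDerivAt c x).hasDerivAt
  have hYf : (fun ω => Y ω * f (Y ω)) =ᵐ[μ] 0 := by
    filter_upwards [hY] with ω hω
    simp [f, intervalIntegral_eq_zero_of_le_of_vanishes_on_Iic hgc hω]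
  have key := hzb f g hf ((integrable_zero _ _ _).congr hYf.symm) hint
  rw [integral_congr_ae hYf, Pi.zero_def, integral_zero] at key
  exact (mul_eq_zero.mp key.symm).resolve_left hσ2

theorem ae_le_of_ae_le [IsFiniteMeasure μ] (hzb : ZeroBiased μ Y Ystar σ2) (hσ2 : σ2 ≠ 0)
    (hYstar : AEStronglyMeasurable Ystar μ) {c : ℝ} (hY : ∀ᵐ ω ∂μ, Y ω ≤ c) :
    ∀ᵐ ω ∂μ, Ystar ω ≤ c := by
  set g : ℝ → ℝ := fun x => min (max (x - c) 0) 1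
  have hg : Continuous g := by fun_prop
  have hg_nonneg : ∀ x, 0 ≤ g x := fun x => le_min (le_max_right _ _) zero_le_one
  have hint : Integrable (fun ω => g (Ystar ω)) μ := by
    refine Integrable.of_bound (hg.comp_aestronglyMeasurable hYstar) 1 (ae_of_all _ fun ω => ?_)
    rw [Real.norm_of_nonneg (hg_nonneg _)]
    exact min_le_right _ _
  have hzero := hzb.integral_comp_eq_zero_of_ae_le hσ2 hY hg
    (fun x hx => by simp [g, max_eq_right (sub_nonpos.mpr hx)]) hint
  filter_upwards [(integral_eq_zero_iff_of_nonneg (fun ω => hg_nonneg _) hint).mp hzero]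
    with ω hω
  by_contra! hlt
  have : 0 < g (Ystar ω) := lt_min (lt_max_of_lt_left (sub_pos.mpr hlt)) zero_lt_one
  exact this.ne' hω

end ZeroBiased

theorem zero_bias_bounded
    {Ω : Type*} [MeasurableSpace Ω] (μ : Measure Ω) [IsProbabilityMeasure μ]
    (Y Ystar : Ω → ℝ) (hYstar : Measurable Ystar)
    (σ2 : ℝ) (hσ2 : 0 < σ2)
    (hzb : ZeroBiased μ Y Ystar σ2)
    (c : ℝ) (hbdd : ∀ᵐ ω ∂μ, |Y ω| ≤ c) :
    ∀ᵐ ω ∂μ, |Ystar ω| ≤ c := by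
  have hupper : ∀ᵐ ω ∂μ, Ystar ω ≤ c :=
    hzb.ae_le_of_ae_le hσ2.ne' hYstar.aestronglyMeasurable
      (hbdd.mono fun _ h => (abs_le.mp h).2)
  have hlower : ∀ᵐ ω ∂μ, -Ystar ω ≤ c :=
    hzb.neg.ae_le_of_ae_le hσ2.ne' hYstar.neg.aestronglyMeasurable
      (hbdd.mono fun _ h => neg_le.mp (abs_le.mp h).1)
  filter_upwards [hupper, hlower] with ω h₁ h₂
  exact abs_le.mpr ⟨neg_le.mp h₂, h₁⟩
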